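/- Generalized Moreau decomposition: for any closed proper convex f : ℝ^m → ℝ, matrix A ∈ ℝ^{n×m}, ρ > 0, and any x ∈ ℝ^n, one has x = (I + ρA∂fAᵀ)⁻¹x + ρA(∂f* + ρAᵀA)⁻¹Aᵀx, where (I + ρA∂fAᵀ)⁻¹ is the (single-valued) proximal operator of ρ·(f∘Aᵀ) and A(∂f* + ρAᵀA)⁻¹Aᵀx is single-valued. -/
import Mathlib


open RealInnerProductSpace

/-- The subdifferential of `f : ℝ^k → ℝ` at `x`. -/
def subdiff {k : ℕ} (f : EuclideanSpace ℝ (Fin k) → ℝ) (x : EuclideanSpace ℝ (Fin k)) :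
    Set (EuclideanSpace ℝ (Fin k)) :=
  {u | ∀ y, f x + ⟪u, y - x⟫ ≤ f y}

/-- Monotonicity of the subdifferential. -/
lemma subdiff_mono {k : ℕ} (g : EuclideanSpace ℝ (Fin k) → ℝ)
    {x₁ x₂ u₁ u₂ : EuclideanSpace ℝ (Fin k)}
    (h₁ : u₁ ∈ subdiff g x₁) (h₂ : u₂ ∈ subdiff g x₂) :
    0 ≤ ⟪u₁ - u₂, x₁ - x₂⟫ := by
  have a := h₁ x₂
  have b := h₂ x₁
  have : ⟪u₁, x₂ - x₁⟫ + ⟪u₂, x₁ - x₂⟫ ≤ 0 := by linarith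
  have e : ⟪u₁ - u₂, x₁ - x₂⟫ = -(⟪u₁, x₂ - x₁⟫ + ⟪u₂, x₁ - x₂⟫) := by
    rw [inner_sub_left]
    have : (x₂ : EuclideanSpace ℝ (Fin k)) - x₁ = -(x₁ - x₂) := by abel
    rw [this, inner_neg_right]
    ring
  linarith [e]

/-- Generalized Moreau decomposition: for closed proper convex `f`, matrix `A`,
`ρ > 0` and any `x`, one has `x = (I + ρA∂fAᵀ)⁻¹x + ρA(∂f* + ρAᵀA)⁻¹Aᵀx`.
Here `u` is the resolvent point, i.e. `x ∈ u + ρA∂f(Aᵀu)`, and `y` is any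
element of `(∂f* + ρAᵀA)⁻¹(Aᵀx)`; the decomposition `x = u + ρAy` holds, and
`A(∂f* + ρAᵀA)⁻¹(Aᵀx)` is single-valued.  Conjugacy is encoded by the
subgradient-inversion fact `x ∈ ∂f*(x*)` iff `x* ∈ ∂f(x)`. -/
theorem stmt18 (n m : ℕ)
    (f fstar : EuclideanSpace ℝ (Fin m) → ℝ)
    (hconv : ConvexOn ℝ Set.univ f)
    (hconj : ∀ v w, w ∈ subdiff f v ↔ v ∈ subdiff fstar w)
    (A : EuclideanSpace ℝ (Fin m) →L[ℝ] EuclideanSpace ℝ (Fin n))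
    (ρ : ℝ) (hρ : 0 < ρ)
    (x u : EuclideanSpace ℝ (Fin n))
    (hu : ∃ w ∈ subdiff f (ContinuousLinearMap.adjoint A u), x = u + ρ • A w)
    (y : EuclideanSpace ℝ (Fin m))
    (hy : ContinuousLinearMap.adjoint A x
        - ρ • ContinuousLinearMap.adjoint A (A y) ∈ subdiff fstar y) :
    x = u + ρ • A y ∧
      ∀ y', (ContinuousLinearMap.adjoint A x
          - ρ • ContinuousLinearMap.adjoint A (A y') ∈ subdiff fstar y') →
        A y' = A y := by
  obtain ⟨w, hw, hx⟩ := hu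
  -- key uniqueness claim
  have key : ∀ y', (ContinuousLinearMap.adjoint A x
      - ρ • ContinuousLinearMap.adjoint A (A y') ∈ subdiff fstar y') → A y' = A y := by
    intro y' hy'
    have hmono := subdiff_mono fstar hy' hy
    have e1 : (ContinuousLinearMap.adjoint A x - ρ • ContinuousLinearMap.adjoint A (A y'))
        - (ContinuousLinearMap.adjoint A x - ρ • ContinuousLinearMap.adjoint A (A y))
        = -(ρ • ContinuousLinearMap.adjoint A (A (y' - y))) := by
      simp [map_sub, smul_sub]
    rw [e1, inner_neg_left, neg_nonneg, real_inner_smul_left] at hmono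
    have e2 : ⟪ContinuousLinearMap.adjoint A (A (y' - y)), y' - y⟫
        = ‖A (y' - y)‖ ^ 2 := by
      rw [ContinuousLinearMap.adjoint_inner_left, real_inner_self_eq_norm_sq]
    have hle : ‖A (y' - y)‖ ^ 2 ≤ 0 := by
      nlinarith [hmono, e2]
    have : A (y' - y) = 0 := by
      have := sq_nonneg ‖A (y' - y)‖
      have hn : ‖A (y' - y)‖ = 0 := by nlinarith
      exact norm_eq_zero.mp hn
    have := sub_eq_zero.mp (by rwa [map_sub] at this)
    exact this
  refine ⟨?_, key⟩
  -- show `w` also satisfies the resolvent condition, hence `A w = A y`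
  have hwcond : ContinuousLinearMap.adjoint A x
      - ρ • ContinuousLinearMap.adjoint A (A w) ∈ subdiff fstar w := by
    have : ContinuousLinearMap.adjoint A x - ρ • ContinuousLinearMap.adjoint A (A w)
        = ContinuousLinearMap.adjoint A u := by
      rw [hx]; simp [map_add, map_smul]
    rw [this]
    exact (hconj _ _).mp hw
  have : A w = A y := key w hwcond
  rw [hx, this]
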